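/- arXiv:2603.00898 — 3 statements merged into one kernel-verified Lean document; each statement's English description precedes it below -/
import Mathlib

section
/- Let $G_1, \dots, G_r$ be independent geometric random variables each with parameter $1/2$, let $w_1, \dots, w_r \ge 0$ with $W_2 = \sum_{i=1}^r w_i^2$ and $W_\infty = \max_i w_i > 0$, and let $Y = \sum_{i=1}^r w_i (G_i - 2)$. Then for every real $c \in [0, 1/(4 W_\infty)]$, $\mathbf{E}[e^{c Y}] \le \exp(4 c^2 W_2)$. -/
open MeasureTheory ProbabilityTheory

/-- `X` is a geometric random variable with parameter `p`, taking values in `{1,2,3,…}`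
with `Pr[X = k] = (1-p)^(k-1) * p`. -/
def IsGeometric {Ω : Type*} [MeasurableSpace Ω] (μ : Measure Ω) (X : Ω → ℕ) (p : ℝ) : Prop :=
  Measurable X ∧
    ∀ k : ℕ, μ {ω | X ω = k} = if k = 0 then 0 else ENNReal.ofReal ((1 - p) ^ (k - 1) * p)

/-!
Each `G i - 2` is centred, and its moment generating function has the closed form
`e^{-t} / (2 - e^t)`; for `|t| ≤ 1/4` the second-order bound `|e^x - 1 - x| ≤ x²` on both
exponentials shows this is at most `1 + 4t² ≤ e^{4t²}`. Independence turns the moment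
generating function of `Y` into the product over `i` of these at `t = c w i ≤ 1/4`.
-/

open Real

lemma exp_le_one_add_add_sq {x : ℝ} (hx : |x| ≤ 1) : exp x ≤ 1 + x + x ^ 2 := by
  linarith [(abs_le.mp (abs_exp_sub_one_sub_id_le hx)).2]

lemma exp_neg_div_two_sub_exp_le {t : ℝ} (ht : |t| ≤ 1 / 4) :
    exp (-t) / (2 - exp t) ≤ exp (4 * t ^ 2) := by
  obtain ⟨ht0, ht1⟩ := abs_le.mp ht
  have hpos := exp_le_one_add_add_sq (x := t) (by linarith)
  have hneg := exp_le_one_add_add_sq (x := -t) (by rw [abs_neg]; linarith)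
  have hden : 0 < 2 - exp t := by nlinarith
  rw [div_le_iff₀ hden]
  calc exp (-t) ≤ (1 + 4 * t ^ 2) * (2 - exp t) := by
        -- `(1 + 4t²)(1 - t - t²) - (1 - t + t²) = 2t²(1 - 2t - 2t²)`
        have hquad : 0 ≤ 1 - 2 * t - 2 * t ^ 2 := by nlinarith
        nlinarith [mul_nonneg (sq_nonneg t) hquad]
    _ ≤ exp (4 * t ^ 2) * (2 - exp t) := by
        gcongr
        linarith [add_one_le_exp (4 * t ^ 2)]

lemma integral_comp_of_hasSum {Ω : Type*} [MeasurableSpace Ω] {μ : Measure Ω} {X : Ω → ℕ}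
    (hX : Measurable X) {q : ℕ → ℝ} (hq0 : ∀ k, 0 ≤ q k)
    (hq : ∀ k, μ {ω | X ω = k} = ENNReal.ofReal (q k)) {f : ℕ → ℝ} (hf : ∀ k, 0 ≤ f k)
    {s : ℝ} (hs : HasSum (fun k => f k * q k) s) :
    ∫ ω, f (X ω) ∂μ = s := by
  have hterm : ∀ k, ENNReal.ofReal (f k) * μ.map X {k} = ENNReal.ofReal (f k * q k) :=
    fun k => by
      rw [Measure.map_apply hX (measurableSet_singleton k), ENNReal.ofReal_mul (hf k)]
      exact congrArg _ (hq k)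
  rw [← integral_map hX.aemeasurable measurable_from_top.aestronglyMeasurable,
    integral_eq_lintegral_of_nonneg_ae (.of_forall hf) measurable_from_top.aestronglyMeasurable,
    lintegral_countable', tsum_congr hterm,
    ← ENNReal.ofReal_tsum_of_nonneg (fun k => mul_nonneg (hf k) (hq0 k)) hs.summable, hs.tsum_eq,
    ENNReal.toReal_ofReal (hs.nonneg fun k => mul_nonneg (hf k) (hq0 k))]

namespace IsGeometric

variable {Ω : Type*} [MeasurableSpace Ω] {μ : Measure Ω} {X : Ω → ℕ} {p : ℝ}

lemma mgf_eq (hX : IsGeometric μ X p) (hp0 : 0 ≤ p) (hp1 : p ≤ 1) {t : ℝ}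
    (ht : (1 - p) * exp t < 1) :
    mgf (fun ω => (X ω : ℝ)) μ t = p * exp t / (1 - (1 - p) * exp t) := by
  set q : ℕ → ℝ := fun k => if k = 0 then 0 else (1 - p) ^ (k - 1) * p
  have hq0 : ∀ k, 0 ≤ q k := fun k => by
    simp only [q]; split_ifs
    exacts [le_rfl, mul_nonneg (pow_nonneg (by linarith) _) hp0]
  have hq : ∀ k, μ {ω | X ω = k} = ENNReal.ofReal (q k) := fun k => by
    rw [hX.2 k]; simp only [q]; split_ifs <;> simp
  have hterm : ∀ n : ℕ, exp (t * ↑(n + 1)) * q (n + 1) = p * exp t * ((1 - p) * exp t) ^ n :=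
    fun n => by
      simp only [q, add_eq_zero, one_ne_zero, and_false, if_false, Nat.add_sub_cancel,
        Nat.cast_succ]
      rw [mul_add_one, exp_add, mul_comm t, exp_nat_mul, mul_pow]
      ring
  have hgeom := (hasSum_geometric_of_lt_one
    (mul_nonneg (by linarith) (exp_pos t).le) ht).mul_left (p * exp t)
  refine integral_comp_of_hasSum (f := fun k => exp (t * k)) hX.1 hq0 hq
    (fun k => (exp_pos _).le) ((hasSum_nat_add_iff' 1).mp ?_)
  show HasSum (fun n : ℕ => exp (t * ↑(n + 1)) * q (n + 1))
    (p * exp t / (1 - (1 - p) * exp t) - ∑ k ∈ Finset.range 1, exp (t * k) * q k)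
  rw [funext hterm]
  simpa [q, div_eq_mul_inv] using hgeom

lemma mgf_sub_two_le (hX : IsGeometric μ X (1 / 2)) {t : ℝ} (ht : |t| ≤ 1 / 4) :
    mgf (fun ω => (X ω : ℝ) - 2) μ t ≤ exp (4 * t ^ 2) := by
  have hexp := exp_le_one_add_add_sq (x := t) (by linarith)
  obtain ⟨ht0, ht1⟩ := abs_le.mp ht
  simp_rw [sub_eq_add_neg]
  rw [mgf_add_const, hX.mgf_eq (by norm_num) (by norm_num) (by nlinarith)]
  convert exp_neg_div_two_sub_exp_le ht using 1
  rw [show t * -2 = -t + -t by ring, exp_add, exp_neg]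
  field_simp
  ring

end IsGeometric

theorem weighted_geometric_mgf_bound_general
    {Ω : Type*} [MeasurableSpace Ω] (μ : Measure Ω)
    {r : ℕ} (G : Fin r → Ω → ℕ)
    (hgeom : ∀ i, IsGeometric μ (G i) (1 / 2))
    (hindep : iIndepFun G μ)
    (w : Fin r → ℝ) (hw : ∀ i, 0 ≤ w i)
    (W₂ Winf : ℝ) (hW₂ : W₂ = ∑ i, (w i) ^ 2)
    (hWinf : IsGreatest (Set.range w) Winf)
    (c : ℝ) (hc0 : 0 ≤ c) (hc1 : c ≤ 1 / (4 * Winf)) :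
    ∫ ω, Real.exp (c * ∑ i, w i * ((G i ω : ℝ) - 2)) ∂μ ≤
      Real.exp (4 * c ^ 2 * W₂) := by
  set Y : Fin r → Ω → ℝ := fun i ω => w i * ((G i ω : ℝ) - 2)
  have hY : ∀ i, Measurable (Y i) := fun i =>
    (measurable_from_top.comp (hgeom i).1 |>.sub_const 2).const_mul (w i)
  have hcWinf : c * Winf ≤ 1 / 4 := by
    rcases le_or_gt Winf 0 with hWinf0 | hWinf0
    · nlinarith
    · rw [le_div_iff₀ (by positivity)] at hc1
      linarith
  have hbound : ∀ i, mgf (Y i) μ c ≤ exp (4 * c ^ 2 * w i ^ 2) := fun i => by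
    rw [mgf_const_mul, mul_comm (w i), show 4 * c ^ 2 * w i ^ 2 = 4 * (c * w i) ^ 2 by ring]
    refine (hgeom i).mgf_sub_two_le ?_
    rw [abs_of_nonneg (mul_nonneg hc0 (hw i))]
    nlinarith [hWinf.2 ⟨i, rfl⟩]
  calc ∫ ω, exp (c * ∑ i, w i * ((G i ω : ℝ) - 2)) ∂μ = mgf (∑ i, Y i) μ c := by
        simp only [mgf, Finset.sum_apply, Y]
    _ = ∏ i, mgf (Y i) μ c :=
        (hindep.comp (fun i (k : ℕ) => w i * ((k : ℝ) - 2)) fun _ => measurable_from_top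
          ).mgf_sum hY _
    _ ≤ ∏ i, exp (4 * c ^ 2 * w i ^ 2) :=
        Finset.prod_le_prod (fun _ _ => mgf_nonneg) fun i _ => hbound i
    _ = exp (4 * c ^ 2 * W₂) := by rw [← exp_sum, hW₂, Finset.mul_sum]

theorem weighted_geometric_mgf_bound
    {Ω : Type*} [MeasurableSpace Ω] (μ : Measure Ω) [IsProbabilityMeasure μ]
    {r : ℕ} (G : Fin r → Ω → ℕ)
    (hgeom : ∀ i, IsGeometric μ (G i) (1 / 2))
    (hindep : iIndepFun G μ)
    (w : Fin r → ℝ) (hw : ∀ i, 0 ≤ w i)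
    (W₂ Winf : ℝ) (hW₂ : W₂ = ∑ i, (w i) ^ 2)
    (hWinf : IsGreatest (Set.range w) Winf) (hWinfPos : 0 < Winf)
    (c : ℝ) (hc0 : 0 ≤ c) (hc1 : c ≤ 1 / (4 * Winf)) :
    ∫ ω, Real.exp (c * ∑ i, w i * ((G i ω : ℝ) - 2)) ∂μ ≤
      Real.exp (4 * c ^ 2 * W₂) :=
  weighted_geometric_mgf_bound_general μ G hgeom hindep w hw W₂ Winf hW₂ hWinf c hc0 hc1
end

section
/- Let $W$ be a natural number, $p \in (0,1]$, and $a > 0$ a real number. Let $\widehat{W} \sim \mathrm{Bin}(W, p)$, and define $f(s) = \frac{s + a + \sqrt{a^2 + 2 s a}}{p}$ for $s \ge 0$. Then $\Pr[f(\widehat{W}) < W] \le e^{-a}$. (In the paper, $a = c \log n$, giving failure probability $n^{-c}$.) -/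
open MeasureTheory ProbabilityTheory

/-- `Y ∼ Bin(t, p)`: the number of successes in `t` independent Bernoulli(`p`) trials. -/
def IsBinomial {Ω : Type*} [MeasurableSpace Ω] (μ : Measure Ω) (Y : Ω → ℕ) (t : ℕ) (p : ℝ) :
    Prop :=
  Measurable Y ∧
    ∀ k : ℕ, μ {ω | Y ω = k} = ENNReal.ofReal ((t.choose k : ℝ) * p ^ k * (1 - p) ^ (t - k))

/-!
From `f(s) < W` one gets `s + a + √(a² + 2sa) < μ` with `μ = Wp`; writing `u = μ - s`, this says
`u - a > √(a² + 2sa)`, and squaring gives `u² > 2a(s + u) = 2aμ`, i.e. `s < μ - √(2aμ)`.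
So the event lies in the lower tail `X ≤ μ - t` with `t = √(2aμ)`, and the Chernoff bound
`exp(-t² / (2μ))` for that tail is exactly `exp(-a)`. The Chernoff bound itself is Markov's
inequality for `exp(-λX)`, whose mean is `(1 - p + p e^{-λ})^W ≤ exp(μ(e^{-λ} - 1))`, combined with
`e^{-λ} ≤ 1 - λ + λ²/2` and `λ = t/μ`.
-/

open Real Finset

theorem Real.exp_neg_le_one_sub_add_sq_div_two {x : ℝ} (hx : 0 ≤ x) :
    exp (-x) ≤ 1 - x + x ^ 2 / 2 := by
  have hderiv : ∀ y : ℝ, HasDerivAt (fun y => 1 - y + y ^ 2 / 2 - exp (-y))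
      (y - 1 + exp (-y)) y := fun y => by
    refine ((((hasDerivAt_id' y).const_sub 1).add ((hasDerivAt_pow 2 y).div_const 2)).sub
      (hasDerivAt_neg' y).exp).congr_deriv ?_
    simp only [Nat.cast_ofNat]; ring
  have hmono := monotone_of_hasDerivAt_nonneg hderiv fun y => by
    simp only [Pi.zero_apply]; linarith [add_one_le_exp (-y)]
  simpa using hmono hx

theorem binomial_sum_filter_le_exp_mul_pow {p : ℝ} (hp0 : 0 ≤ p) (hp1 : p ≤ 1) (W : ℕ) (r : ℝ)
    {l : ℝ} (hl : 0 ≤ l) :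
    ∑ j ∈ (range (W + 1)).filter (fun j : ℕ => (j : ℝ) ≤ r),
        (W.choose j : ℝ) * p ^ j * (1 - p) ^ (W - j) ≤
      exp (l * r) * (p * exp (-l) + (1 - p)) ^ W := by
  have hq : 0 ≤ 1 - p := by linarith
  -- Markov's inequality for `exp (-l X)`: the weight `exp (l * (r - j))` is at least `1` on the tail.
  calc ∑ j ∈ (range (W + 1)).filter (fun j : ℕ => (j : ℝ) ≤ r),
          (W.choose j : ℝ) * p ^ j * (1 - p) ^ (W - j)
      ≤ ∑ j ∈ range (W + 1),
          exp (l * (r - j)) * ((W.choose j : ℝ) * p ^ j * (1 - p) ^ (W - j)) := by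
        rw [sum_filter]
        refine sum_le_sum fun j _ => ?_
        split_ifs with hj
        · exact le_mul_of_one_le_left (by positivity) (one_le_exp (by nlinarith))
        · positivity
    _ = exp (l * r) * (p * exp (-l) + (1 - p)) ^ W := by
        rw [add_pow, mul_sum]
        refine sum_congr rfl fun j _ => ?_
        rw [show l * (r - j) = l * r + j * -l by ring, exp_add, exp_nat_mul]
        ring

theorem mul_add_one_sub_pow_le_exp {p x : ℝ} (hp0 : 0 ≤ p) (hp1 : p ≤ 1) (hx : 0 ≤ x) (W : ℕ) :
    (p * x + (1 - p)) ^ W ≤ exp (W * p * (x - 1)) := by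
  calc (p * x + (1 - p)) ^ W ≤ exp (p * (x - 1)) ^ W :=
        pow_le_pow_left₀ (by nlinarith) (by linarith [add_one_le_exp (p * (x - 1))]) W
    _ = exp (W * p * (x - 1)) := by rw [← exp_nat_mul, mul_assoc]

theorem binomial_lower_tail_sum_le {p : ℝ} (hp0 : 0 ≤ p) (hp1 : p ≤ 1) (W : ℕ) {t : ℝ}
    (ht : 0 ≤ t) :
    ∑ j ∈ (range (W + 1)).filter (fun j : ℕ => (j : ℝ) ≤ W * p - t),
        (W.choose j : ℝ) * p ^ j * (1 - p) ^ (W - j) ≤ exp (-t ^ 2 / (2 * (W * p))) := by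
  -- For `W * p = 0` the right-hand side is `exp 0 = 1`, since `t ^ 2 / 0 = 0`.
  rcases (by positivity : (0 : ℝ) ≤ W * p).eq_or_lt with hm | hm
  · simpa [← hm] using binomial_sum_filter_le_exp_mul_pow hp0 hp1 W (W * p - t) le_rfl
  set m : ℝ := W * p
  -- `t / m` minimizes the exponent `l * (m - t) + m * (l ^ 2 / 2 - l)` obtained below.
  set l := t / m
  have hl : 0 ≤ l := by positivity
  calc _ ≤ exp (l * (m - t)) * (p * exp (-l) + (1 - p)) ^ W :=
        binomial_sum_filter_le_exp_mul_pow hp0 hp1 W (m - t) hl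
    _ ≤ exp (l * (m - t)) * exp (m * (exp (-l) - 1)) := by
        gcongr
        exact mul_add_one_sub_pow_le_exp hp0 hp1 (exp_nonneg _) W
    _ ≤ exp (l * (m - t)) * exp (m * (l ^ 2 / 2 - l)) := by
        gcongr _ * exp (m * ?_)
        linarith [exp_neg_le_one_sub_add_sq_div_two hl]
    _ = exp (-t ^ 2 / (2 * m)) := by
        rw [← exp_add]
        congr 1
        simp only [l]
        field_simp
        ring

theorem IsBinomial.measure_le_sub_le {Ω : Type*} [MeasurableSpace Ω] {μ : Measure Ω}
    {X : Ω → ℕ} {W : ℕ} {p : ℝ} (hX : IsBinomial μ X W p) (hp0 : 0 ≤ p) (hp1 : p ≤ 1) {t : ℝ}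
    (ht : 0 ≤ t) :
    μ {ω | (X ω : ℝ) ≤ W * p - t} ≤ ENNReal.ofReal (exp (-t ^ 2 / (2 * (W * p)))) := by
  set S := (range (W + 1)).filter (fun j : ℕ => (j : ℝ) ≤ W * p - t)
  have hsub : {ω | (X ω : ℝ) ≤ W * p - t} ⊆ ⋃ j ∈ S, {ω | X ω = j} := fun ω hω => by
    have hXW : (X ω : ℝ) ≤ W := by
      have : (W : ℝ) * p ≤ W := mul_le_of_le_one_right (Nat.cast_nonneg W) hp1
      exact hω.out.trans (by linarith)
    exact Set.mem_biUnion (mem_filter.2 ⟨mem_range.2 (Nat.lt_succ_of_le (mod_cast hXW)), hω⟩) rfl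
  calc μ {ω | (X ω : ℝ) ≤ W * p - t} ≤ ∑ j ∈ S, μ {ω | X ω = j} :=
        (measure_mono hsub).trans (measure_biUnion_finset_le S _)
    _ = ENNReal.ofReal (∑ j ∈ S, (W.choose j : ℝ) * p ^ j * (1 - p) ^ (W - j)) := by
        rw [ENNReal.ofReal_sum_of_nonneg fun j _ =>
          mul_nonneg (by positivity) (pow_nonneg (by linarith) _)]
        exact sum_congr rfl fun j _ => hX.2 j
    _ ≤ ENNReal.ofReal (exp (-t ^ 2 / (2 * (W * p)))) :=
        ENNReal.ofReal_le_ofReal (binomial_lower_tail_sum_le hp0 hp1 W ht)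

theorem le_sub_sqrt_of_add_add_sqrt_lt {a s m : ℝ} (ha : 0 ≤ a) (hs : 0 ≤ s)
    (h : s + a + √(a ^ 2 + 2 * s * a) < m) : s ≤ m - √(2 * a * m) := by
  have hu := sq_sqrt (by positivity : 0 ≤ a ^ 2 + 2 * s * a)
  have hu0 := sqrt_nonneg (a ^ 2 + 2 * s * a)
  have : √(2 * a * m) ≤ m - s := sqrt_le_iff.2 ⟨by linarith, by nlinarith⟩
  linarith

theorem allocation_function_inversion_general
    {Ω : Type*} [MeasurableSpace Ω] (μ : Measure Ω)
    (W : ℕ) (p : ℝ) (hp0 : 0 < p) (hp1 : p ≤ 1) (a : ℝ) (ha : 0 < a)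
    (X : Ω → ℕ) (hX : IsBinomial μ X W p)
    (f : ℝ → ℝ) (hf : ∀ s, f s = (s + a + Real.sqrt (a ^ 2 + 2 * s * a)) / p) :
    μ {ω | f (X ω : ℝ) < (W : ℝ)} ≤ ENNReal.ofReal (Real.exp (-a)) := by
  have hf_lt : ∀ s, f s < W → s + a + √(a ^ 2 + 2 * s * a) < W * p := fun s hs => by
    rwa [hf, div_lt_iff₀ hp0] at hs
  obtain hempty | ⟨ω₀, hω₀⟩ := Set.eq_empty_or_nonempty {ω | f (X ω : ℝ) < (W : ℝ)}
  · simp [hempty]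
  have hm : 0 < (W : ℝ) * p := by
    linarith [hf_lt _ hω₀, sqrt_nonneg (a ^ 2 + 2 * X ω₀ * a), Nat.cast_nonneg (α := ℝ) (X ω₀)]
  calc μ {ω | f (X ω : ℝ) < (W : ℝ)} ≤ μ {ω | (X ω : ℝ) ≤ W * p - √(2 * a * (W * p))} :=
        measure_mono fun ω hω => le_sub_sqrt_of_add_add_sqrt_lt ha.le (Nat.cast_nonneg _)
          (hf_lt _ hω)
    _ ≤ ENNReal.ofReal (exp (-√(2 * a * (W * p)) ^ 2 / (2 * (W * p)))) :=
        hX.measure_le_sub_le hp0.le hp1 (sqrt_nonneg _)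
    _ = ENNReal.ofReal (exp (-a)) := by
        rw [sq_sqrt (by positivity), neg_div, mul_comm 2 a, mul_assoc,
          mul_div_cancel_right₀ _ (by positivity)]

theorem allocation_function_inversion
    {Ω : Type*} [MeasurableSpace Ω] (μ : Measure Ω) [IsProbabilityMeasure μ]
    (W : ℕ) (p : ℝ) (hp0 : 0 < p) (hp1 : p ≤ 1) (a : ℝ) (ha : 0 < a)
    (X : Ω → ℕ) (hX : IsBinomial μ X W p)
    (f : ℝ → ℝ) (hf : ∀ s, f s = (s + a + Real.sqrt (a ^ 2 + 2 * s * a)) / p) :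
    μ {ω | f (X ω : ℝ) < (W : ℝ)} ≤ ENNReal.ofReal (Real.exp (-a)) :=
  allocation_function_inversion_general μ W p hp0 hp1 a ha X hX f hf
end

section
/- Let $\sigma_1, \dots, \sigma_r \ge 0$ be real numbers with $\sum_{i=1}^r \sigma_i \le S$, let $a \ge 0$, let $p \in (0,1]$, and define $f(s) = \frac{s + a + \sqrt{a^2 + 2 s a}}{p}$. Then $p \sum_{i=1}^r f(\sigma_i) \le S + 2 a r + \sqrt{2 a r S}$. -/
theorem allocation_sum_bound
    {r : ℕ} (σ : Fin r → ℝ) (hσ : ∀ i, 0 ≤ σ i)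
    (S : ℝ) (hS : ∑ i, σ i ≤ S)
    (a : ℝ) (ha : 0 ≤ a) (p : ℝ) (hp0 : 0 < p) (hp1 : p ≤ 1)
    (f : ℝ → ℝ) (hf : ∀ s, f s = (s + a + Real.sqrt (a ^ 2 + 2 * s * a)) / p) :
    p * ∑ i, f (σ i) ≤ S + 2 * a * r + Real.sqrt (2 * a * r * S) := by
  have hS0 : 0 ≤ S := le_trans (Finset.sum_nonneg fun i _ => hσ i) hS
  have hps : p * ∑ i, f (σ i)
      = ∑ i, (σ i + a + Real.sqrt (a ^ 2 + 2 * σ i * a)) := by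
    rw [Finset.mul_sum]
    refine Finset.sum_congr rfl fun i _ => ?_
    rw [hf]; field_simp
  rw [hps]
  have key : ∀ i : Fin r, σ i + a + Real.sqrt (a ^ 2 + 2 * σ i * a)
      ≤ σ i + 2 * a + Real.sqrt (2 * a) * Real.sqrt (σ i) := by
    intro i
    have h2sa : (0:ℝ) ≤ 2 * σ i * a := mul_nonneg (mul_nonneg (by norm_num) (hσ i)) ha
    have h1 : Real.sqrt (a ^ 2 + 2 * σ i * a) ≤ a + Real.sqrt (2 * σ i * a) := by
      have hle : a ^ 2 + 2 * σ i * a ≤ (a + Real.sqrt (2 * σ i * a)) ^ 2 := by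
        nlinarith [Real.sq_sqrt h2sa, Real.sqrt_nonneg (2 * σ i * a), ha]
      calc Real.sqrt (a ^ 2 + 2 * σ i * a) ≤ Real.sqrt ((a + Real.sqrt (2 * σ i * a)) ^ 2) :=
            Real.sqrt_le_sqrt hle
        _ = a + Real.sqrt (2 * σ i * a) := by
            rw [Real.sqrt_sq (add_nonneg ha (Real.sqrt_nonneg _))]
    have h2 : Real.sqrt (2 * σ i * a) = Real.sqrt (2 * a) * Real.sqrt (σ i) := by
      rw [← Real.sqrt_mul (by positivity)]
      ring_nf
    linarith [h1, h2.le, h2.ge]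
  have hsum : ∑ i, (σ i + a + Real.sqrt (a ^ 2 + 2 * σ i * a))
      ≤ (∑ i, σ i) + 2 * a * r + Real.sqrt (2 * a) * ∑ i, Real.sqrt (σ i) := by
    have := Finset.sum_le_sum (s := Finset.univ) (fun i _ => key i)
    simp only [Finset.sum_add_distrib, Finset.sum_const, Finset.card_univ,
      Fintype.card_fin, nsmul_eq_mul, ← Finset.mul_sum] at this ⊢
    linarith
  have hcs : ∑ i, Real.sqrt (σ i) ≤ Real.sqrt (r * S) := by
    have h1 : (∑ i, Real.sqrt (σ i)) ^ 2 ≤ (r : ℝ) * ∑ i, σ i := by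
      have := sq_sum_le_card_mul_sum_sq (s := (Finset.univ : Finset (Fin r)))
        (f := fun i => Real.sqrt (σ i))
      simp only [Finset.card_univ, Fintype.card_fin] at this
      calc (∑ i, Real.sqrt (σ i)) ^ 2 ≤ (r : ℝ) * ∑ i, Real.sqrt (σ i) ^ 2 := this
        _ = (r : ℝ) * ∑ i, σ i := by
            congr 1; exact Finset.sum_congr rfl fun i _ => Real.sq_sqrt (hσ i)
    have h2 : (∑ i, Real.sqrt (σ i)) ^ 2 ≤ (r : ℝ) * S := by
      refine h1.trans ?_
      exact mul_le_mul_of_nonneg_left hS (Nat.cast_nonneg r)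
    calc ∑ i, Real.sqrt (σ i) = Real.sqrt ((∑ i, Real.sqrt (σ i)) ^ 2) := by
          rw [Real.sqrt_sq (Finset.sum_nonneg fun i _ => Real.sqrt_nonneg _)]
      _ ≤ Real.sqrt ((r : ℝ) * S) := Real.sqrt_le_sqrt h2
  have hfinal : Real.sqrt (2 * a) * Real.sqrt ((r : ℝ) * S)
      = Real.sqrt (2 * a * r * S) := by
    rw [← Real.sqrt_mul (by positivity)]
    ring_nf
  have hmul : Real.sqrt (2 * a) * ∑ i, Real.sqrt (σ i)
      ≤ Real.sqrt (2 * a * r * S) := by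
    rw [← hfinal]
    exact mul_le_mul_of_nonneg_left hcs (Real.sqrt_nonneg _)
  linarith [hsum, hmul, hS]
end
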